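/- Let ρ > 0, x₀ ≥ 0, b₀ > 0, b > 0, M > 0, and let F : ℝ → ℝ be continuously differentiable with F(0) = 0, −b₀ ≤ F'(y) ≤ 0 for all y ∈ ℝ, and F(y) ≤ −b·y + M for all y ≥ 0. Let u be an admissible control with ∫₀^∞ e^{-ρt} u(t) dt ≤ K₁ < ∞, and let x be a trajectory associated with u. Then t ↦ e^{-ρt} x(t) is integrable on [0,∞) and ∫₀^∞ e^{-ρt} x(t) dt ≤ x₀/(ρ+b) + M/(ρ(ρ+b)) + K₁/(ρ+b). -/

import Mathlib

open MeasureTheory Filter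

/-- A control `u` is admissible: measurable, locally integrable on `[0,∞)`,
and positive almost everywhere on `[0,∞)`. -/
def Admissible (u : ℝ → ℝ) : Prop :=
  Measurable u ∧ (∀ T : ℝ, 0 < T → IntegrableOn u (Set.Icc 0 T)) ∧
    (∀ᵐ t ∂(volume.restrict (Set.Ici (0:ℝ))), 0 < u t)

/-- `x` is a trajectory associated with the control `u`, dynamics `F` and
initial state `x₀`. -/
def Trajectory (F : ℝ → ℝ) (x₀ : ℝ) (u x : ℝ → ℝ) : Prop :=
  ContinuousOn x (Set.Ici 0) ∧
    ∀ t : ℝ, 0 ≤ t → x t = x₀ + ∫ s in (0:ℝ)..t, (F (x s) + u s)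

/-- The objective functional `B(u,x) = ∫₀^∞ e^{-ρt}(log u(t) - c x(t)²) dt`. -/
noncomputable def objective (ρ c : ℝ) (u x : ℝ → ℝ) : ℝ :=
  ∫ t in Set.Ioi (0:ℝ), Real.exp (-ρ * t) * (Real.log (u t) - c * (x t) ^ 2)

/-- Integrability of the integrand of the objective functional. -/
def ObjIntegrable (ρ c : ℝ) (u x : ℝ → ℝ) : Prop :=
  IntegrableOn (fun t => Real.exp (-ρ * t) * (Real.log (u t) - c * (x t) ^ 2))
    (Set.Ioi (0:ℝ))

/-!
Since `F` is nonincreasing with `F 0 = 0` and `u > 0`, the state stays nonnegative: on an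
interval where it is negative the drift `F (x) + u` is positive. The function
`t ↦ x₀ + ∫₀ᵗ (F (x) + u)` is absolutely continuous, so integration by parts gives
`ρ ∫₀ᵀ e^{-ρt} x = x₀ - e^{-ρT} x(T) + ∫₀ᵀ e^{-ρt} (F (x) + u)`. Bounding `F (x) ≤ -b x + M` and
dropping `e^{-ρT} x(T) ≥ 0` yields `(ρ + b) ∫₀ᵀ e^{-ρt} x ≤ x₀ + M / ρ + K₁` for every `T`, and a
nonnegative integrand with bounded partial integrals is integrable on `(0, ∞)`.
-/

open Set Real

theorem ContinuousOn.exists_nonneg_and_neg_on_Ioc {f : ℝ → ℝ} {a b : ℝ} (hab : a ≤ b)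
    (hf : ContinuousOn f (Icc a b)) (ha : 0 ≤ f a) :
    ∃ c ∈ Icc a b, 0 ≤ f c ∧ ∀ s ∈ Ioc c b, f s < 0 := by
  set S := Icc a b ∩ f ⁻¹' Ici 0
  have hS : IsClosed S := hf.preimage_isClosed_of_isClosed isClosed_Icc isClosed_Ici
  have hbdd : BddAbove S := bddAbove_Icc.mono inter_subset_left
  have hc : sSup S ∈ S := hS.csSup_mem ⟨a, left_mem_Icc.2 hab, ha⟩ hbdd
  refine ⟨sSup S, hc.1, hc.2, fun s hs => ?_⟩
  by_contra! h
  exact (le_csSup hbdd ⟨⟨hc.1.1.trans hs.1.le, hs.2⟩, h⟩).not_gt hs.1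

theorem hasDerivAt_exp_neg_mul (ρ t : ℝ) :
    HasDerivAt (fun t => exp (-ρ * t)) (-ρ * exp (-ρ * t)) t := by
  simpa [mul_comm] using ((hasDerivAt_id t).const_mul (-ρ)).exp

theorem integral_exp_neg_mul {ρ : ℝ} (hρ : ρ ≠ 0) (T : ℝ) :
    ∫ t in (0 : ℝ)..T, exp (-ρ * t) = (1 - exp (-ρ * T)) / ρ := by
  rw [intervalIntegral.integral_comp_mul_left (fun t => exp t) (neg_ne_zero.mpr hρ), integral_exp]
  simp only [inv_neg, neg_mul, mul_zero, exp_zero, smul_eq_mul]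
  field_simp
  ring

theorem AbsolutelyContinuousOnInterval.mul_integral_exp_neg_mul_mul {f : ℝ → ℝ} {a b : ℝ}
    (hf : AbsolutelyContinuousOnInterval f a b) (ρ : ℝ) :
    ρ * ∫ t in a..b, exp (-ρ * t) * f t =
      exp (-ρ * a) * f a - exp (-ρ * b) * f b + ∫ t in a..b, exp (-ρ * t) * deriv f t := by
  have hexp : AbsolutelyContinuousOnInterval (fun t => exp (-ρ * t)) a b :=
    ContDiffOn.absolutelyContinuousOnInterval (by fun_prop)
  have hparts := hf.integral_mul_deriv_eq_deriv_mul hexp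
  simp only [(hasDerivAt_exp_neg_mul ρ _).deriv, mul_comm (f _), mul_comm (deriv f _), mul_assoc,
    intervalIntegral.integral_const_mul] at hparts
  linarith

theorem intervalIntegral_le_setIntegral_Ioi {f : ℝ → ℝ} {a T : ℝ} (hT : a ≤ T)
    (hf : IntegrableOn f (Ioi a)) (hnn : ∀ᵐ t ∂volume.restrict (Ioi a), 0 ≤ f t) :
    ∫ t in a..T, f t ≤ ∫ t in Ioi a, f t := by
  rw [intervalIntegral.integral_of_le hT]
  exact setIntegral_mono_set hf hnn Ioc_subset_Ioi_self.eventuallyLE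

theorem integrableOn_Ioi_and_setIntegral_le {f : ℝ → ℝ} {a C : ℝ}
    (hfi : ∀ T, IntegrableOn f (Ioc a T)) (hnn : ∀ t ∈ Ici a, 0 ≤ f t)
    (hC : ∀ T, a < T → ∫ t in a..T, f t ≤ C) :
    IntegrableOn f (Ioi a) ∧ ∫ t in Ioi a, f t ≤ C := by
  have hnorm (T : ℝ) (hT : a ≤ T) : ∫ t in a..T, ‖f t‖ = ∫ t in a..T, f t :=
    intervalIntegral.integral_congr fun t ht =>
      norm_of_nonneg (hnn t (by rw [uIcc_of_le hT] at ht; exact ht.1))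
  have hint : IntegrableOn f (Ioi a) := by
    refine integrableOn_Ioi_of_intervalIntegral_norm_bounded C a hfi tendsto_id ?_
    filter_upwards [eventually_gt_atTop a] with T hT
    exact hnorm T hT.le ▸ hC T hT
  refine ⟨hint, le_of_tendsto (intervalIntegral_tendsto_integral_Ioi a hint tendsto_id) ?_⟩
  filter_upwards [eventually_gt_atTop a] with T hT
  exact hC T hT

theorem Admissible.intervalIntegrable {u : ℝ → ℝ} (hu : Admissible u) {T : ℝ} (hT : 0 ≤ T) :
    IntervalIntegrable u volume 0 T := by
  rcases hT.eq_or_lt with rfl | hT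
  · exact IntervalIntegrable.refl
  · exact (intervalIntegrable_iff_integrableOn_Icc_of_le hT.le).2 (hu.2.1 T hT)

namespace Trajectory

variable {F : ℝ → ℝ} {x₀ : ℝ} {u x : ℝ → ℝ}

theorem apply_zero (hx : Trajectory F x₀ u x) : x 0 = x₀ := by
  simpa using hx.2 0 le_rfl

theorem intervalIntegrable (hx : Trajectory F x₀ u x) (hF : Continuous F) {T : ℝ} (hT : 0 ≤ T)
    (hu : IntervalIntegrable u volume 0 T) :
    IntervalIntegrable (fun s => F (x s) + u s) volume 0 T := by
  refine ContinuousOn.intervalIntegrable ?_ |>.add hu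
  exact hF.comp_continuousOn (hx.1.mono (by rw [uIcc_of_le hT]; exact Icc_subset_Ici_self))

theorem sub_eq_integral (hx : Trajectory F x₀ u x) {s t : ℝ} (hs : 0 ≤ s) (hst : s ≤ t)
    (hg : IntervalIntegrable (fun r => F (x r) + u r) volume 0 t) :
    x t - x s = ∫ r in s..t, (F (x r) + u r) := by
  have hgs := hg.mono_set (uIcc_subset_uIcc_left (mem_uIcc_of_le hs hst))
  rw [hx.2 t (hs.trans hst), hx.2 s hs, ← intervalIntegral.integral_interval_sub_left hg hgs]
  ring

theorem nonneg (hx : Trajectory F x₀ u x) (hF : Continuous F) (hF_anti : Antitone F)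
    (hF0 : F 0 = 0) (hx₀ : 0 ≤ x₀) (hu_pos : ∀ᵐ t ∂volume.restrict (Ici 0), 0 < u t)
    {t : ℝ} (ht : 0 ≤ t) (hu : IntervalIntegrable u volume 0 t) : 0 ≤ x t := by
  by_contra! hneg
  obtain ⟨c, hc, hxc, hlt⟩ := (hx.1.mono Icc_subset_Ici_self).exists_nonneg_and_neg_on_Ioc ht
    (hx.apply_zero ▸ hx₀)
  have hdrift : 0 ≤ ∫ s in c..t, (F (x s) + u s) := by
    rw [intervalIntegral.integral_of_le hc.2]
    refine setIntegral_nonneg_of_ae_restrict ?_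
    have hsub : Ioc c t ⊆ Ici 0 := fun s hs => hc.1.trans hs.1.le
    filter_upwards [ae_restrict_mem measurableSet_Ioc,
      ae_restrict_of_ae_restrict_of_subset hsub hu_pos] with s hs hus
    have := hF_anti (hlt s hs).le
    rw [hF0] at this
    exact add_nonneg this hus.le
  have := hx.sub_eq_integral hc.1 hc.2 (hx.intervalIntegrable hF ht hu)
  linarith

theorem mul_integral_exp_neg_mul_mul (hx : Trajectory F x₀ u x) (ρ : ℝ) {T : ℝ} (hT : 0 ≤ T)
    (hg : IntervalIntegrable (fun s => F (x s) + u s) volume 0 T) :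
    ρ * ∫ t in (0 : ℝ)..T, exp (-ρ * t) * x t =
      x₀ - exp (-ρ * T) * x T + ∫ t in (0 : ℝ)..T, exp (-ρ * t) * (F (x t) + u t) := by
  set X : ℝ → ℝ := fun t => x₀ + ∫ s in (0 : ℝ)..t, (F (x s) + u s)
  have hX : AbsolutelyContinuousOnInterval X 0 T :=
    contDiffOn_const.absolutelyContinuousOnInterval.add
      (hg.absolutelyContinuousOnInterval_intervalIntegral left_mem_uIcc)
  have hxX : EqOn x X (uIcc 0 T) := fun t ht => hx.2 t (by rw [uIcc_of_le hT] at ht; exact ht.1)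
  have hderiv : ∀ᵐ t, t ∈ uIoc 0 T → deriv X t = F (x t) + u t := by
    filter_upwards [hg.ae_hasDerivAt_integral] with t ht htT
    exact ((ht (uIoc_subset_uIcc htT) 0 left_mem_uIcc).const_add x₀).deriv
  calc ρ * ∫ t in (0 : ℝ)..T, exp (-ρ * t) * x t
      = ρ * ∫ t in (0 : ℝ)..T, exp (-ρ * t) * X t := by
        congr 1
        exact intervalIntegral.integral_congr fun t ht => by simp only [hxX ht]
    _ = exp (-ρ * 0) * X 0 - exp (-ρ * T) * X T + ∫ t in (0 : ℝ)..T, exp (-ρ * t) * deriv X t :=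
        hX.mul_integral_exp_neg_mul_mul ρ
    _ = x₀ - exp (-ρ * T) * x T + ∫ t in (0 : ℝ)..T, exp (-ρ * t) * (F (x t) + u t) := by
        rw [intervalIntegral.integral_congr_ae (hderiv.mono fun t ht htT => by rw [ht htT]),
          ← hxX right_mem_uIcc]
        simp [X]

theorem add_mul_integral_exp_neg_mul_mul_le (hx : Trajectory F x₀ u x) {ρ b M : ℝ}
    (hρ : 0 < ρ) (hM : 0 ≤ M) (hFlin : ∀ y : ℝ, 0 ≤ y → F y ≤ -b * y + M) {T : ℝ} (hT : 0 ≤ T)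
    (hx_nonneg : ∀ t ∈ Icc 0 T, 0 ≤ x t)
    (hg : IntervalIntegrable (fun s => F (x s) + u s) volume 0 T)
    (hu : IntervalIntegrable (fun t => exp (-ρ * t) * u t) volume 0 T) :
    (ρ + b) * ∫ t in (0 : ℝ)..T, exp (-ρ * t) * x t ≤
      x₀ + M / ρ + ∫ t in (0 : ℝ)..T, exp (-ρ * t) * u t := by
  have hxc : ContinuousOn x (uIcc 0 T) :=
    hx.1.mono (by rw [uIcc_of_le hT]; exact Icc_subset_Ici_self)
  have hexp_x : IntervalIntegrable (fun t => exp (-ρ * t) * x t) volume 0 T :=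
    (ContinuousOn.mul (by fun_prop) hxc).intervalIntegrable
  have hexp : IntervalIntegrable (fun t => exp (-ρ * t)) volume 0 T :=
    (by fun_prop : Continuous fun t => exp (-ρ * t)).intervalIntegrable 0 T
  have hdrift : ∫ t in (0 : ℝ)..T, exp (-ρ * t) * (F (x t) + u t) ≤
      ∫ t in (0 : ℝ)..T, (-b * (exp (-ρ * t) * x t) + M * exp (-ρ * t) + exp (-ρ * t) * u t) := by
    refine intervalIntegral.integral_mono_on hT (hg.continuousOn_mul (by fun_prop))
      (((hexp_x.const_mul _).add (hexp.const_mul _)).add hu) fun t ht => ?_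
    have := mul_le_mul_of_nonneg_left (hFlin _ (hx_nonneg t ht)) (exp_pos (-ρ * t)).le
    linarith
  rw [intervalIntegral.integral_add ((hexp_x.const_mul _).add (hexp.const_mul _)) hu,
    intervalIntegral.integral_add (hexp_x.const_mul _) (hexp.const_mul _),
    intervalIntegral.integral_const_mul, intervalIntegral.integral_const_mul,
    integral_exp_neg_mul hρ.ne'] at hdrift
  have hM_le : M * ((1 - exp (-ρ * T)) / ρ) ≤ M / ρ := by
    rw [mul_div_assoc']
    gcongr
    exact mul_le_of_le_one_right hM (by linarith [exp_pos (-ρ * T)])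
  have hxT : 0 ≤ exp (-ρ * T) * x T := mul_nonneg (exp_pos _).le (hx_nonneg T ⟨hT, le_rfl⟩)
  linarith [hx.mul_integral_exp_neg_mul_mul ρ hT hg]

end Trajectory

theorem discounted_state_bound_general
    (ρ x₀ b₀ b M K₁ : ℝ) (F : ℝ → ℝ) (u x : ℝ → ℝ)
    (hρ : 0 < ρ) (hx₀ : 0 ≤ x₀) (hb : 0 < b) (hM : 0 < M)
    (hF : ContDiff ℝ 1 F) (hF0 : F 0 = 0)
    (hF' : ∀ y : ℝ, -b₀ ≤ deriv F y ∧ deriv F y ≤ 0)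
    (hFlin : ∀ y : ℝ, 0 ≤ y → F y ≤ -b * y + M)
    (hu : Admissible u)
    (huint : IntegrableOn (fun t => Real.exp (-ρ * t) * u t) (Set.Ioi (0:ℝ)))
    (huK : (∫ t in Set.Ioi (0:ℝ), Real.exp (-ρ * t) * u t) ≤ K₁)
    (hx : Trajectory F x₀ u x) :
    IntegrableOn (fun t => Real.exp (-ρ * t) * x t) (Set.Ioi (0:ℝ)) ∧
      (∫ t in Set.Ioi (0:ℝ), Real.exp (-ρ * t) * x t) ≤
        x₀ / (ρ + b) + M / (ρ * (ρ + b)) + K₁ / (ρ + b) := by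
  have hF_anti : Antitone F :=
    antitone_of_deriv_nonpos (hF.differentiable one_ne_zero) fun y => (hF' y).2
  have hx_nonneg (t : ℝ) (ht : 0 ≤ t) : 0 ≤ x t :=
    hx.nonneg hF.continuous hF_anti hF0 hx₀ hu.2.2 ht (hu.intervalIntegrable ht)
  have hu_pos : ∀ᵐ t ∂volume.restrict (Ioi 0), 0 ≤ exp (-ρ * t) * u t := by
    filter_upwards [ae_restrict_of_ae_restrict_of_subset Ioi_subset_Ici_self hu.2.2] with t ht
    exact mul_nonneg (exp_pos _).le ht.le
  refine integrableOn_Ioi_and_setIntegral_le (fun T => ?_)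
    (fun t ht => mul_nonneg (exp_pos _).le (hx_nonneg t ht)) fun T hT => ?_
  · have hc : ContinuousOn (fun t => exp (-ρ * t) * x t) (Ici 0) :=
      (by fun_prop : Continuous fun t => exp (-ρ * t)).continuousOn.mul hx.1
    exact (hc.mono Icc_subset_Ici_self).integrableOn_Icc.mono_set Ioc_subset_Icc_self
  · have hbound := hx.add_mul_integral_exp_neg_mul_mul_le hρ hM.le hFlin hT.le
      (fun t ht => hx_nonneg t ht.1) (hx.intervalIntegrable hF.continuous hT.le
        (hu.intervalIntegrable hT.le)) ((intervalIntegrable_iff_integrableOn_Ioc_of_le hT.le).2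
        (huint.mono_set Ioc_subset_Ioi_self))
    have hK := (intervalIntegral_le_setIntegral_Ioi hT.le huint hu_pos).trans huK
    rw [show x₀ / (ρ + b) + M / (ρ * (ρ + b)) + K₁ / (ρ + b) = (x₀ + M / ρ + K₁) / (ρ + b) by
      field_simp, le_div_iff₀ (by positivity)]
    linarith

/-- Bound on the discounted integral of the state in terms of the discounted
integral of the control. -/
theorem discounted_state_bound
    (ρ x₀ b₀ b M K₁ : ℝ) (F : ℝ → ℝ) (u x : ℝ → ℝ)
    (hρ : 0 < ρ) (hx₀ : 0 ≤ x₀) (hb₀ : 0 < b₀) (hb : 0 < b) (hM : 0 < M)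
    (hF : ContDiff ℝ 1 F) (hF0 : F 0 = 0)
    (hF' : ∀ y : ℝ, -b₀ ≤ deriv F y ∧ deriv F y ≤ 0)
    (hFlin : ∀ y : ℝ, 0 ≤ y → F y ≤ -b * y + M)
    (hu : Admissible u)
    (huint : IntegrableOn (fun t => Real.exp (-ρ * t) * u t) (Set.Ioi (0:ℝ)))
    (huK : (∫ t in Set.Ioi (0:ℝ), Real.exp (-ρ * t) * u t) ≤ K₁)
    (hx : Trajectory F x₀ u x) :
    IntegrableOn (fun t => Real.exp (-ρ * t) * x t) (Set.Ioi (0:ℝ)) ∧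
      (∫ t in Set.Ioi (0:ℝ), Real.exp (-ρ * t) * x t) ≤
        x₀ / (ρ + b) + M / (ρ * (ρ + b)) + K₁ / (ρ + b) :=
  discounted_state_bound_general ρ x₀ b₀ b M K₁ F u x hρ hx₀ hb hM hF hF0 hF' hFlin hu huint huK hx
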